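/- arXiv:2209.15302 — 5 statements merged into one kernel-verified Lean document; each statement's English description precedes it below -/
import Mathlib

section
/- Let a(n,j) be the number of permutations of [n] with exactly j odd-position descents and no even-position descents, and let ā(n,j) be the number of permutations of [n] with exactly j odd-position descents and no even-position ascents. Then ā(n,j) = a(n, ⌊n/2⌋ − j) for all 0 ≤ j ≤ ⌊n/2⌋. -/
def idx1 {n : ℕ} (i : Fin (n - 1)) : Fin n := ⟨i.val, by have := i.isLt; omega⟩
def idx2 {n : ℕ} (i : Fin (n - 1)) : Fin n := ⟨i.val + 1, by have := i.isLt; omega⟩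

def des0 {n : ℕ} (σ : Equiv.Perm (Fin n)) : ℕ :=
  (Finset.univ.filter (fun i : Fin (n - 1) =>
    (i.val + 1) % 2 = 0 ∧ σ (idx2 i) < σ (idx1 i))).card

def des1 {n : ℕ} (σ : Equiv.Perm (Fin n)) : ℕ :=
  (Finset.univ.filter (fun i : Fin (n - 1) =>
    (i.val + 1) % 2 = 1 ∧ σ (idx2 i) < σ (idx1 i))).card

def asc0 {n : ℕ} (σ : Equiv.Perm (Fin n)) : ℕ :=
  (Finset.univ.filter (fun i : Fin (n - 1) =>
    (i.val + 1) % 2 = 0 ∧ σ (idx1 i) < σ (idx2 i))).card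

/-- number of permutations of `[n]` with `j` odd-position descents and no even-position descents -/
noncomputable def a (n j : ℕ) : ℕ :=
  Nat.card {σ : Equiv.Perm (Fin n) // des1 σ = j ∧ des0 σ = 0}

/-- number of permutations of `[n]` with `j` odd-position descents and no even-position ascents -/
noncomputable def abar (n j : ℕ) : ℕ :=
  Nat.card {σ : Equiv.Perm (Fin n) // des1 σ = j ∧ asc0 σ = 0}

def asc1 {n : ℕ} (σ : Equiv.Perm (Fin n)) : ℕ :=
  (Finset.univ.filter (fun i : Fin (n - 1) =>
    (i.val + 1) % 2 = 1 ∧ σ (idx1 i) < σ (idx2 i))).card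

lemma sigma_ne {n : ℕ} (σ : Equiv.Perm (Fin n)) (i : Fin (n - 1)) :
    σ (idx1 i) ≠ σ (idx2 i) := by
  intro h
  have := σ.injective h
  simp [idx1, idx2, Fin.ext_iff] at this

lemma count_odd (n : ℕ) :
    ((Finset.univ : Finset (Fin (n - 1))).filter
      (fun i => (i.val + 1) % 2 = 1)).card = n / 2 := by
  have key : ∀ m : ℕ, ((Finset.univ : Finset (Fin m)).filter
      (fun i => (i.val + 1) % 2 = 1)).card = (m + 1) / 2 := by
    intro m
    induction m with
    | zero => simp
    | succ k ih =>
      rw [Finset.card_filter] at *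
      rw [Fin.sum_univ_eq_sum_range (fun i => if (i + 1) % 2 = 1 then 1 else 0)] at *
      rw [Finset.sum_range_succ, ih]
      split_ifs with h <;> omega
  rw [key]; omega

lemma des1_add_asc1 {n : ℕ} (σ : Equiv.Perm (Fin n)) :
    des1 σ + asc1 σ = n / 2 := by
  rw [← count_odd n]
  unfold des1 asc1
  have h1 : ∀ p : Fin (n - 1) → Prop, ∀ inst : DecidablePred p,
      (Finset.univ.filter (fun i : Fin (n-1) => (i.val + 1) % 2 = 1 ∧ p i)) =
      ((Finset.univ.filter (fun i : Fin (n-1) => (i.val + 1) % 2 = 1)).filter p) := by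
    intro p _; rw [Finset.filter_filter]
  rw [h1 _ _, h1 _ _]
  set O := Finset.univ.filter (fun i : Fin (n-1) => (i.val + 1) % 2 = 1) with hO
  have key := Finset.card_filter_add_card_filter_not
    (s := O) (p := fun i => σ (idx2 i) < σ (idx1 i))
  have h2 : O.filter (fun i => ¬ σ (idx2 i) < σ (idx1 i)) =
      O.filter (fun i => σ (idx1 i) < σ (idx2 i)) := by
    apply Finset.filter_congr
    intro i _
    have hne := sigma_ne σ i
    simp only [not_lt, eq_iff_iff]
    constructor
    · intro h; exact lt_of_le_of_ne h hne
    · intro h; exact le_of_lt h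
  rw [h2] at key
  exact key

lemma des1_rev {n : ℕ} (σ : Equiv.Perm (Fin n)) :
    des1 (Fin.revPerm * σ) = asc1 σ := by
  unfold des1 asc1
  congr 1
  apply Finset.filter_congr
  intro i _
  simp [Fin.rev_lt_rev]

lemma des0_rev {n : ℕ} (σ : Equiv.Perm (Fin n)) :
    des0 (Fin.revPerm * σ) = asc0 σ := by
  unfold des0 asc0
  congr 1
  apply Finset.filter_congr
  intro i _
  simp [Fin.rev_lt_rev]

lemma asc0_rev {n : ℕ} (σ : Equiv.Perm (Fin n)) :
    asc0 (Fin.revPerm * σ) = des0 σ := by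
  unfold des0 asc0
  congr 1
  apply Finset.filter_congr
  intro i _
  simp [Fin.rev_lt_rev]

lemma rev_rev {n : ℕ} (σ : Equiv.Perm (Fin n)) :
    Fin.revPerm * (Fin.revPerm * σ) = σ := by
  ext x
  simp

theorem stmt3 (n j : ℕ) (hj : j ≤ n / 2) :
    abar n j = a n (n / 2 - j) := by
  unfold abar a
  refine Nat.card_congr ⟨fun σ => ⟨Fin.revPerm * σ.1, ?_, ?_⟩,
    fun τ => ⟨Fin.revPerm * τ.1, ?_, ?_⟩,
    fun σ => Subtype.ext (rev_rev σ.1), fun τ => Subtype.ext (rev_rev τ.1)⟩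
  · rw [des1_rev]
    have h3 := des1_add_asc1 σ.1
    have h1 := σ.2.1
    omega
  · rw [des0_rev]; exact σ.2.2
  · rw [des1_rev]
    have h3 := des1_add_asc1 τ.1
    have h1 := τ.2.1
    omega
  · rw [asc0_rev]; exact τ.2.2
end

section
/- Define P_n(x,y) = Σ_{σ ∈ S_n} Σ_{S : D(σ) ⊆ S ⊆ [n-1]} x^{|S ∩ odd|} y^{|S ∩ even|}, and A_n(x,y) = Σ_{σ ∈ S_n} x^{des₁(σ)} y^{des₀(σ)}. Then P_n(x,y) = (1+x)^{⌊n/2⌋} (1+y)^{⌊(n-1)/2⌋} A_n(x/(1+x), y/(1+y)) as an identity of rational functions, equivalently A_n(x,y) = (1−x)^{⌊n/2⌋}(1−y)^{⌊(n-1)/2⌋} P_n(x/(1−x), y/(1−y)). -/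
/-- the descent set of `σ`, as a set of (0-based encoded) positions of `[n-1]` -/
def descentSet {n : ℕ} (σ : Equiv.Perm (Fin n)) : Finset (Fin (n - 1)) :=
  Finset.univ.filter (fun i : Fin (n - 1) => σ (idx2 i) < σ (idx1 i))

/-- `P_n(x,y) = Σ_σ Σ_{D(σ) ⊆ S ⊆ [n-1]} x^{|S∩odd|} y^{|S∩even|}` -/
noncomputable def P (n : ℕ) (x y : ℝ) : ℝ :=
  ∑ σ : Equiv.Perm (Fin n),
    ∑ S ∈ Finset.univ.filter (fun S : Finset (Fin (n - 1)) => descentSet σ ⊆ S),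
      x ^ (S.filter (fun i => (i.val + 1) % 2 = 1)).card *
      y ^ (S.filter (fun i => (i.val + 1) % 2 = 0)).card

/-- `A_n(x,y) = Σ_σ x^{des₁ σ} y^{des₀ σ}` -/
noncomputable def A (n : ℕ) (x y : ℝ) : ℝ :=
  ∑ σ : Equiv.Perm (Fin n), x ^ des1 σ * y ^ des0 σ

/-!
For a fixed `σ`, give position `i` the weight `w i = x` or `y` according to its parity. The inner
sum of `P` over `S ⊇ D(σ)` factors as `∏_{i ∈ D} w i * ∏_{i ∉ D} (1 + w i)`; multiplying and
dividing by `∏_{i ∈ D} (1 + w i)` turns it into `∏_i (1 + w i) * ∏_{i ∈ D} w i / (1 + w i)`,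
which is `(1 + x) ^ ⌊n/2⌋ * (1 + y) ^ ⌊(n-1)/2⌋` times the summand of `A` at `x / (1 + x)`,
`y / (1 + y)`. The second identity is the first one at `x / (1 - x)`, `y / (1 - y)`.
-/

open Finset

section SupersetSum

variable {ι : Type*} [Fintype ι] [DecidableEq ι]

theorem sum_supersets_prod {R : Type*} [CommSemiring R] (D : Finset ι) (f : ι → R) :
    ∑ S ∈ univ.filter (D ⊆ ·), ∏ i ∈ S, f i = (∏ i ∈ D, f i) * ∏ i ∈ Dᶜ, (1 + f i) := by
  rw [prod_one_add, mul_sum]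
  refine sum_nbij' (· \ D) (D ∪ ·) ?_ ?_ ?_ ?_ ?_
  · intro S _
    exact mem_powerset.mpr fun i hi => mem_compl.mpr (mem_sdiff.mp hi).2
  · intro T _
    simp
  · intro S hS
    exact union_sdiff_of_subset (mem_filter.mp hS).2
  · intro T hT
    exact union_sdiff_cancel_left
      (disjoint_of_subset_right (mem_powerset.mp hT) disjoint_compl_right)
  · intro S hS
    rw [← prod_union disjoint_sdiff, union_sdiff_of_subset (mem_filter.mp hS).2]

theorem prod_mul_prod_compl_one_add {K : Type*} [Field K] (D : Finset ι) (f : ι → K)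
    (hf : ∀ i, 1 + f i ≠ 0) :
    (∏ i ∈ D, f i) * ∏ i ∈ Dᶜ, (1 + f i) = (∏ i, (1 + f i)) * ∏ i ∈ D, f i / (1 + f i) := by
  rw [← prod_mul_prod_compl D (fun i => 1 + f i), prod_div_distrib]
  have : ∏ i ∈ D, (1 + f i) ≠ 0 := prod_ne_zero_iff.mpr fun i _ => hf i
  field_simp

end SupersetSum

theorem card_filter_succ_mod_two_eq_one (m : ℕ) :
    #(univ.filter fun i : Fin m => (i.val + 1) % 2 = 1) = (m + 1) / 2 := by
  rw [card_filter, Fin.sum_univ_eq_sum_range (fun j => if (j + 1) % 2 = 1 then 1 else 0),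
    ← card_filter]
  induction m with
  | zero => simp
  | succ k ih =>
    rw [range_add_one, filter_insert]
    split_ifs with h
    · rw [card_insert_of_notMem (by simp), ih]; omega
    · rw [ih]; omega

theorem card_filter_succ_mod_two_eq_zero (m : ℕ) :
    #(univ.filter fun i : Fin m => (i.val + 1) % 2 = 0) = m / 2 := by
  have := card_filter_add_card_filter_not (s := (univ : Finset (Fin m)))
    fun i => (i.val + 1) % 2 = 1
  rw [card_filter_succ_mod_two_eq_one, card_univ, Fintype.card_fin] at this
  rw [filter_congr fun i _ => show (i.val + 1) % 2 = 0 ↔ ¬(i.val + 1) % 2 = 1 by omega]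
  omega

/-- `x` at the odd and `y` at the even positions of `[m]`, in the 0-based encoding of
`descentSet` -/
def parityWeight {R : Type*} {m : ℕ} (x y : R) (i : Fin m) : R :=
  if (i.val + 1) % 2 = 1 then x else y

section ParityWeight

variable {R : Type*} {m : ℕ}

theorem prod_parityWeight [CommMonoid R] (x y : R) (S : Finset (Fin m)) :
    ∏ i ∈ S, parityWeight x y i =
      x ^ #(S.filter fun i => (i.val + 1) % 2 = 1) *
        y ^ #(S.filter fun i => (i.val + 1) % 2 = 0) := by
  simp only [parityWeight]
  rw [prod_ite, prod_const, prod_const]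
  congr 3
  exact filter_congr fun i _ => by omega

theorem prod_univ_parityWeight [CommMonoid R] (x y : R) :
    ∏ i : Fin m, parityWeight x y i = x ^ ((m + 1) / 2) * y ^ (m / 2) := by
  rw [prod_parityWeight, card_filter_succ_mod_two_eq_one, card_filter_succ_mod_two_eq_zero]

theorem one_add_parityWeight [Add R] [One R] (x y : R) (i : Fin m) :
    1 + parityWeight x y i = parityWeight (1 + x) (1 + y) i :=
  apply_ite _ _ _ _

theorem parityWeight_div_one_add [Add R] [One R] [Div R] (x y : R) (i : Fin m) :
    parityWeight x y i / (1 + parityWeight x y i) = parityWeight (x / (1 + x)) (y / (1 + y)) i := by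
  unfold parityWeight
  split_ifs <;> rfl

end ParityWeight

theorem prod_descentSet_parityWeight {n : ℕ} (σ : Equiv.Perm (Fin n)) (x y : ℝ) :
    ∏ i ∈ descentSet σ, parityWeight x y i = x ^ des1 σ * y ^ des0 σ := by
  simp only [prod_parityWeight, descentSet, des1, des0, filter_filter, and_comm]

theorem A_eq_sum_prod_parityWeight (n : ℕ) (x y : ℝ) :
    A n x y = ∑ σ : Equiv.Perm (Fin n), ∏ i ∈ descentSet σ, parityWeight x y i := by
  simp only [A, prod_descentSet_parityWeight]

theorem P_eq_sum_prod_parityWeight (n : ℕ) (x y : ℝ) :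
    P n x y = ∑ σ : Equiv.Perm (Fin n),
      ∑ S ∈ univ.filter (descentSet σ ⊆ ·), ∏ i ∈ S, parityWeight x y i := by
  simp only [P, prod_parityWeight]

theorem P_eq_mul_A {n : ℕ} {x y : ℝ} (hx : 1 + x ≠ 0) (hy : 1 + y ≠ 0) :
    P n x y = (1 + x) ^ (n / 2) * (1 + y) ^ ((n - 1) / 2) * A n (x / (1 + x)) (y / (1 + y)) := by
  have hw (i : Fin (n - 1)) : 1 + parityWeight x y i ≠ 0 := by
    rw [one_add_parityWeight, parityWeight]
    split_ifs <;> assumption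
  rw [P_eq_sum_prod_parityWeight, A_eq_sum_prod_parityWeight, mul_sum]
  refine sum_congr rfl fun σ _ => ?_
  rw [sum_supersets_prod, prod_mul_prod_compl_one_add _ _ hw]
  simp only [parityWeight_div_one_add]
  simp only [one_add_parityWeight, prod_univ_parityWeight]
  rw [show (n - 1 + 1) / 2 = n / 2 by omega]

theorem A_eq_mul_P {n : ℕ} {x y : ℝ} (hx : 1 - x ≠ 0) (hy : 1 - y ≠ 0) :
    A n x y = (1 - x) ^ (n / 2) * (1 - y) ^ ((n - 1) / 2) * P n (x / (1 - x)) (y / (1 - y)) := by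
  have one_add_div (t : ℝ) (ht : 1 - t ≠ 0) : 1 + t / (1 - t) = (1 - t)⁻¹ := by
    field_simp; ring
  have div_one_add_div (t : ℝ) (ht : 1 - t ≠ 0) : t / (1 - t) / (1 + t / (1 - t)) = t := by
    rw [one_add_div t ht]; field_simp
  rw [P_eq_mul_A (by rw [one_add_div x hx]; exact inv_ne_zero hx)
      (by rw [one_add_div y hy]; exact inv_ne_zero hy),
    div_one_add_div x hx, div_one_add_div y hy, one_add_div x hx, one_add_div y hy, inv_pow,
    inv_pow, ← mul_assoc, mul_mul_mul_comm, mul_inv_cancel₀ (pow_ne_zero _ hx),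
    mul_inv_cancel₀ (pow_ne_zero _ hy), one_mul, one_mul]

theorem stmt6 (n : ℕ) (x y : ℝ) :
    (x ≠ -1 → y ≠ -1 →
      P n x y =
        (1 + x) ^ (n / 2) * (1 + y) ^ ((n - 1) / 2) *
          A n (x / (1 + x)) (y / (1 + y))) ∧
    (x ≠ 1 → y ≠ 1 →
      A n x y =
        (1 - x) ^ (n / 2) * (1 - y) ^ ((n - 1) / 2) *
          P n (x / (1 - x)) (y / (1 - y))) :=
  ⟨fun hx hy => P_eq_mul_A (by contrapose! hx; linarith) (by contrapose! hy; linarith),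
    fun hx hy => A_eq_mul_P (sub_ne_zero.mpr hx.symm) (sub_ne_zero.mpr hy.symm)⟩
end

section
/- The negation map τ ↦ τ⁻ with τ⁻(i) = −τ(i) is an involution on signed permutations B_n (prepended with 0) satisfying des₁(τ) + des₁(τ⁻) = ⌊n/2⌋ and des₀(τ) + des₀(τ⁻) = ⌊(n+1)/2⌋, and it restricts to a bijection between signed permutations with positive first entry and those with negative first entry. -/
/-- The value at (1-based) position `k` of the signed permutation determined by the
unsigned permutation `π` and the signs `ε` (with the prepended value `0` at position `0`). -/
def bval {n : ℕ} (π : Equiv.Perm (Fin n)) (ε : Fin n → Bool) (k : ℕ) : ℤ :=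
  if h : 1 ≤ k ∧ k ≤ n then
    (if ε ⟨k - 1, by omega⟩ then -(((π ⟨k - 1, by omega⟩ : Fin n) : ℤ) + 1)
     else ((π ⟨k - 1, by omega⟩ : Fin n) : ℤ) + 1)
  else 0

/-- number of descents at even positions `i ∈ {0,…,n-1}` of a signed permutation -/
def bdes0 {n : ℕ} (π : Equiv.Perm (Fin n)) (ε : Fin n → Bool) : ℕ :=
  ((Finset.range n).filter (fun i => i % 2 = 0 ∧ bval π ε (i + 1) < bval π ε i)).card

/-- number of descents at odd positions `i ∈ {0,…,n-1}` of a signed permutation -/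
def bdes1 {n : ℕ} (π : Equiv.Perm (Fin n)) (ε : Fin n → Bool) : ℕ :=
  ((Finset.range n).filter (fun i => i % 2 = 1 ∧ bval π ε (i + 1) < bval π ε i)).card

/-- number of ascents at even positions `i ∈ {0,…,n-1}` of a signed permutation -/
def basc0 {n : ℕ} (π : Equiv.Perm (Fin n)) (ε : Fin n → Bool) : ℕ :=
  ((Finset.range n).filter (fun i => i % 2 = 0 ∧ bval π ε i < bval π ε (i + 1))).card

/-- number of ascents at odd positions `i ∈ {0,…,n-1}` of a signed permutation -/
def basc1 {n : ℕ} (π : Equiv.Perm (Fin n)) (ε : Fin n → Bool) : ℕ :=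
  ((Finset.range n).filter (fun i => i % 2 = 1 ∧ bval π ε i < bval π ε (i + 1))).card

/-- the negation map `τ ↦ τ⁻` on signed permutations: flip every sign. -/
def negSigns {n : ℕ} (ε : Fin n → Bool) : Fin n → Bool := fun i => !(ε i)

lemma bval_neg {n : ℕ} (π : Equiv.Perm (Fin n)) (ε : Fin n → Bool) (k : ℕ) :
    bval π (negSigns ε) k = - bval π ε k := by
  unfold bval negSigns
  split_ifs with h h1 h2 <;> simp_all

lemma bval_ne {n : ℕ} (π : Equiv.Perm (Fin n)) (ε : Fin n → Bool) (i : ℕ) (hi : i < n) :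
    bval π ε i ≠ bval π ε (i + 1) := by
  rcases Nat.eq_zero_or_pos i with rfl | hpos
  · unfold bval
    rw [dif_neg (by omega), dif_pos (by omega : 1 ≤ 0 + 1 ∧ 0 + 1 ≤ n)]
    split_ifs <;> omega
  · unfold bval
    rw [dif_pos (by omega : 1 ≤ i ∧ i ≤ n), dif_pos (by omega : 1 ≤ i + 1 ∧ i + 1 ≤ n)]
    have key : ((π ⟨i - 1, by omega⟩ : Fin n) : ℕ) ≠ ((π ⟨i + 1 - 1, by omega⟩ : Fin n) : ℕ) := by
      intro h
      have := π.injective (Fin.val_injective h)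
      have : i - 1 = i + 1 - 1 := congrArg Fin.val this
      omega
    split_ifs <;> omega

lemma card_odd_range (n : ℕ) : ((Finset.range n).filter (fun i => i % 2 = 1)).card = n / 2 := by
  induction n with
  | zero => simp
  | succ n ih =>
    rw [Finset.range_add_one, Finset.filter_insert]
    split_ifs with h
    · rw [Finset.card_insert_of_notMem (by simp), ih]; omega
    · rw [ih]; omega

lemma card_even_range (n : ℕ) : ((Finset.range n).filter (fun i => i % 2 = 0)).card = (n + 1) / 2 := by
  induction n with
  | zero => simp
  | succ n ih =>
    rw [Finset.range_add_one, Finset.filter_insert]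
    split_ifs with h
    · rw [Finset.card_insert_of_notMem (by simp), ih]; omega
    · rw [ih]; omega

lemma des_asc {n : ℕ} (π : Equiv.Perm (Fin n)) (ε : Fin n → Bool) (c : ℕ) :
    ((Finset.range n).filter (fun i => i % 2 = c ∧ bval π ε (i + 1) < bval π ε i)).card
    + ((Finset.range n).filter (fun i => i % 2 = c ∧ bval π ε i < bval π ε (i + 1))).card
    = ((Finset.range n).filter (fun i => i % 2 = c)).card := by
  classical
  rw [← Finset.filter_filter, ← Finset.filter_filter]
  have h2 : ((Finset.range n).filter (fun i => i % 2 = c)).filter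
        (fun i => bval π ε i < bval π ε (i + 1))
      = ((Finset.range n).filter (fun i => i % 2 = c)).filter
        (fun i => ¬ (bval π ε (i + 1) < bval π ε i)) := by
    apply Finset.filter_congr
    intro i hi
    simp only [Finset.mem_filter, Finset.mem_range] at hi
    have := bval_ne π ε i hi.1
    constructor <;> intro h <;> simp_all <;> omega
  rw [h2]
  exact Finset.card_filter_add_card_filter_not _

lemma asc_eq {n : ℕ} (π : Equiv.Perm (Fin n)) (ε : Fin n → Bool) (c : ℕ) :
    ((Finset.range n).filter (fun i => i % 2 = c ∧ bval π (negSigns ε) (i + 1) < bval π (negSigns ε) i)).card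
    = ((Finset.range n).filter (fun i => i % 2 = c ∧ bval π ε i < bval π ε (i + 1))).card := by
  congr 1
  apply Finset.filter_congr
  intro i _
  rw [bval_neg, bval_neg]
  constructor <;> rintro ⟨h1, h2⟩ <;> exact ⟨h1, by omega⟩

theorem stmt13 (n : ℕ) (π : Equiv.Perm (Fin n)) (ε : Fin n → Bool) :
    negSigns (negSigns ε) = ε ∧
    bdes1 π ε + bdes1 π (negSigns ε) = n / 2 ∧
    bdes0 π ε + bdes0 π (negSigns ε) = (n + 1) / 2 ∧
    (1 ≤ n → (0 < bval π ε 1 ↔ bval π (negSigns ε) 1 < 0)) := by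
  refine ⟨by funext i; simp [negSigns], ?_, ?_, ?_⟩
  · rw [bdes1, bdes1, asc_eq, des_asc, card_odd_range]
  · rw [bdes0, bdes0, asc_eq, des_asc, card_even_range]
  · intro hn
    rw [bval_neg]
    omega
end

section
/- If ω ∈ B_n is a signed permutation (prepended with 0) with some number j of odd-position descents and no even-position descents, then the underlying unsigned permutation |ω| ∈ S_n satisfies lpk(|ω|) ≤ j, where lpk counts left peaks. -/
/-- the value at (1-based) position `k` of the unsigned permutation `u` of `[n]`,
with the convention `u 0 = 0`. -/
def uval {n : ℕ} (u : Equiv.Perm (Fin n)) (k : ℕ) : ℕ :=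
  if h : 1 ≤ k ∧ k ≤ n then ((u ⟨k - 1, by omega⟩ : Fin n) : ℕ) + 1 else 0

/-- the number of left peaks of `u`: indices `1 ≤ i < n` with `u(i-1) < u(i) > u(i+1)`,
with the convention `u 0 = 0`. -/
def lpk {n : ℕ} (u : Equiv.Perm (Fin n)) : ℕ :=
  ((Finset.Ico 1 n).filter
    (fun i => uval u (i - 1) < uval u i ∧ uval u (i + 1) < uval u i)).card

/-!
Send each left peak `i` of `|ω|` to an odd-position descent of `ω`. If `ω(i) > 0`, then
`ω(i+1) ≤ |ω(i+1)| < |ω(i)| = ω(i)` is a descent at `i`; if `ω(i) < 0`, then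
`ω(i) = -|ω(i)| < -|ω(i-1)| ≤ ω(i-1)` is a descent at `i-1`. As there are no even-position
descents, the descent found is at an odd position. Two left peaks are never adjacent, so the
assignment is injective.
-/

section

variable {n : ℕ} (π : Equiv.Perm (Fin n)) (ε : Fin n → Bool)

theorem abs_bval (k : ℕ) : |bval π ε k| = uval π k := by
  unfold bval uval
  split_ifs
  · rw [abs_neg, abs_of_nonneg (by positivity)]; push_cast; rfl
  · rw [abs_of_nonneg (by positivity)]; push_cast; rfl
  · rfl

variable {π ε}

theorem bval_succ_lt_of_pos {i : ℕ} (hpos : 0 < bval π ε i)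
    (hlt : uval π (i + 1) < uval π i) : bval π ε (i + 1) < bval π ε i := by
  have := abs_bval π ε i
  have := abs_bval π ε (i + 1)
  have := le_abs_self (bval π ε (i + 1))
  rw [abs_of_pos hpos] at *
  omega

theorem bval_succ_lt_of_nonpos {i : ℕ} (hnonpos : bval π ε (i + 1) ≤ 0)
    (hlt : uval π i < uval π (i + 1)) : bval π ε (i + 1) < bval π ε i := by
  have := abs_bval π ε i
  have := abs_bval π ε (i + 1)
  have := neg_abs_le (bval π ε i)
  rw [abs_of_nonpos hnonpos] at *
  omega

theorem mod_two_eq_one_of_bdes0_eq_zero (h0 : bdes0 π ε = 0) {i : ℕ} (hi : i < n)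
    (hdes : bval π ε (i + 1) < bval π ε i) : i % 2 = 1 := by
  rw [bdes0, Finset.card_eq_zero, Finset.filter_eq_empty_iff] at h0
  have := h0 (Finset.mem_range.mpr hi)
  omega

variable (π ε) in
def leftPeakDescent (i : ℕ) : ℕ := if 0 < bval π ε i then i else i - 1

theorem leftPeakDescent_isDescent {i : ℕ} (hi1 : 1 ≤ i) (hin : i < n)
    (hrise : uval π (i - 1) < uval π i) (hfall : uval π (i + 1) < uval π i) :
    leftPeakDescent π ε i < n ∧
      bval π ε (leftPeakDescent π ε i + 1) < bval π ε (leftPeakDescent π ε i) := by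
  obtain ⟨k, rfl⟩ : ∃ k, i = k + 1 := ⟨i - 1, by omega⟩
  rw [Nat.add_sub_cancel] at hrise
  unfold leftPeakDescent
  split_ifs with hpos
  · exact ⟨hin, bval_succ_lt_of_pos hpos hfall⟩
  · exact ⟨by omega, bval_succ_lt_of_nonpos (not_lt.mp hpos) hrise⟩

theorem leftPeakDescent_ne_of_lt {a b : ℕ} (hab : a < b) (hfall : uval π (a + 1) < uval π a)
    (hrise : uval π (b - 1) < uval π b) : leftPeakDescent π ε a ≠ leftPeakDescent π ε b := by
  intro h
  -- the values lie in `{a - 1, a}` and `{b - 1, b}`, so only adjacent peaks could collide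
  obtain rfl : b = a + 1 := by unfold leftPeakDescent at h; split_ifs at h <;> omega
  rw [Nat.add_sub_cancel] at hrise
  omega

end

theorem stmt16 (n j : ℕ) (π : Equiv.Perm (Fin n)) (ε : Fin n → Bool)
    (h1 : bdes1 π ε = j) (h0 : bdes0 π ε = 0) :
    lpk π ≤ j := by
  subst h1
  refine Finset.card_le_card_of_injOn (leftPeakDescent π ε) ?_ ?_
  · rintro i hi
    simp only [Finset.coe_filter, Finset.mem_Ico, Set.mem_ofPred_eq] at hi
    obtain ⟨⟨hi1, hin⟩, hrise, hfall⟩ := hi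
    obtain ⟨hdn, hdes⟩ := leftPeakDescent_isDescent (ε := ε) hi1 hin hrise hfall
    simp only [Finset.coe_filter, Finset.mem_range, Set.mem_ofPred_eq]
    exact ⟨hdn, mod_two_eq_one_of_bdes0_eq_zero h0 hdn hdes, hdes⟩
  · intro a ha b hb hab
    simp only [Finset.coe_filter, Finset.mem_Ico, Set.mem_ofPred_eq] at ha hb
    rcases Nat.lt_trichotomy a b with h | h | h
    · exact absurd hab (leftPeakDescent_ne_of_lt h ha.2.2 hb.2.1)
    · exact h
    · exact absurd hab.symm (leftPeakDescent_ne_of_lt h hb.2.2 ha.2.1)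
end

section
/- Let b(n,j) be the number of signed permutations in B_n (prepended with 0) with exactly j odd-position descents and no even-position descents, and let g(n,i) = #{u ∈ S_n : lpk(u) = i} count permutations by left peaks. Then b(n,j) = Σ_{i=0}^{j} C(⌊n/2⌋−i, j−i) g(n,i) 2^i. -/
/-- number of signed permutations of `[±n]` with `j` odd-position descents and no
even-position descents -/
noncomputable def b (n j : ℕ) : ℕ :=
  Nat.card {p : Equiv.Perm (Fin n) × (Fin n → Bool) //
    bdes1 p.1 p.2 = j ∧ bdes0 p.1 p.2 = 0}

/-- number of permutations of `[n]` with exactly `i` left peaks -/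
noncomputable def g (n i : ℕ) : ℕ :=
  Nat.card {u : Equiv.Perm (Fin n) // lpk u = i}

namespace Stmt17
variable {n : ℕ} (π : Equiv.Perm (Fin n)) (ε : Fin n → Bool)

lemma uval_pos {k : ℕ} (h1 : 1 ≤ k) (h2 : k ≤ n) : 0 < uval π k := by
  unfold uval; rw [dif_pos ⟨h1, h2⟩]; omega

lemma uval_zero {k : ℕ} (h : ¬(1 ≤ k ∧ k ≤ n)) : uval π k = 0 := by
  unfold uval; rw [dif_neg h]

lemma uval_inj {k l : ℕ} (h1 : 1 ≤ k) (h2 : k ≤ n) (h3 : 1 ≤ l) (h4 : l ≤ n)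
    (h : uval π k = uval π l) : k = l := by
  unfold uval at h
  rw [dif_pos ⟨h1, h2⟩, dif_pos ⟨h3, h4⟩] at h
  have h' : (π ⟨k-1, by omega⟩ : Fin n) = π ⟨l-1, by omega⟩ := Fin.val_injective (by omega)
  have h'' : (⟨k-1, by omega⟩ : Fin n) = ⟨l-1, by omega⟩ := π.injective h'
  have := congrArg Fin.val h''
  simp only at this
  omega

lemma uval_ne {k l : ℕ} (h1 : 1 ≤ k) (h2 : k ≤ n) (h3 : 1 ≤ l) (h4 : l ≤ n)
    (h : k ≠ l) : uval π k ≠ uval π l :=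
  fun he => h (uval_inj π h1 h2 h3 h4 he)

lemma bval_eq {k : ℕ} (h1 : 1 ≤ k) (h2 : k ≤ n) :
    bval π ε k = if ε ⟨k - 1, by omega⟩ then -(uval π k : ℤ) else (uval π k : ℤ) := by
  unfold bval uval
  rw [dif_pos ⟨h1, h2⟩, dif_pos ⟨h1, h2⟩]
  split <;> push_cast <;> ring

lemma bval_zero : bval π ε 0 = 0 := rfl

/-- Core sign-comparison rule for an edge between positions i and i+1. -/
lemma desc_iff {i : ℕ} (h1 : 1 ≤ i) (h2 : i + 1 ≤ n) :
    (bval π ε (i+1) < bval π ε i ↔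
      (if uval π (i+1) < uval π i then ε ⟨i - 1, by omega⟩ = false
       else ε ⟨i, by omega⟩ = true)) := by
  have hne := uval_ne π h1 (by omega) (by omega : 1 ≤ i+1) h2 (by omega)
  have hp1 := uval_pos π h1 (by omega)
  have hp2 := uval_pos π (by omega : 1 ≤ i+1) h2
  rw [bval_eq π ε h1 (by omega), bval_eq π ε (by omega : 1 ≤ i+1) h2]
  have he : (⟨i + 1 - 1, by omega⟩ : Fin n) = ⟨i, by omega⟩ := by simp
  rw [he]
  rcases hb1 : ε ⟨i - 1, by omega⟩ <;> rcases hb2 : ε ⟨i, by omega⟩ <;>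
    by_cases hc : uval π (i+1) < uval π i <;>
    simp only [hc, if_true, if_false, Bool.false_eq_true, Bool.true_eq_false,
      if_pos, if_neg, not_false_iff, iff_true, iff_false, not_lt] <;>
    simp [hc] <;> omega

end Stmt17
namespace Stmt17
variable {n : ℕ} (π : Equiv.Perm (Fin n)) (ε : Fin n → Bool)

lemma asc_iff {i : ℕ} (h1 : 1 ≤ i) (h2 : i + 1 ≤ n) :
    (bval π ε i < bval π ε (i+1) ↔
      (if uval π i < uval π (i+1) then ε ⟨i, by omega⟩ = false
       else ε ⟨i - 1, by omega⟩ = true)) := by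
  have hne := uval_ne π h1 (by omega) (by omega : 1 ≤ i+1) h2 (by omega)
  have hp1 := uval_pos π h1 (by omega)
  have hp2 := uval_pos π (by omega : 1 ≤ i+1) h2
  rw [bval_eq π ε h1 (by omega), bval_eq π ε (by omega : 1 ≤ i+1) h2]
  have he : (⟨i + 1 - 1, by omega⟩ : Fin n) = ⟨i, by omega⟩ := by simp
  rw [he]
  rcases hb1 : ε ⟨i - 1, by omega⟩ <;> rcases hb2 : ε ⟨i, by omega⟩ <;>
    by_cases hc : uval π i < uval π (i+1) <;>
    simp only [hc, if_true, if_false, Bool.false_eq_true, Bool.true_eq_false,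
      if_pos, if_neg, not_false_iff, iff_true, iff_false, not_lt] <;>
    simp [hc] <;> omega

lemma desc0_iff (h : 1 ≤ n) :
    (bval π ε 1 < bval π ε 0 ↔ ε ⟨0, by omega⟩ = true) := by
  have hp := uval_pos π le_rfl h
  rw [bval_zero, bval_eq π ε le_rfl h]
  rcases hb : ε ⟨1-1, by omega⟩ <;> simp [hb] <;> omega

lemma asc0_iff (h : 1 ≤ n) :
    (bval π ε 0 < bval π ε 1 ↔ ε ⟨0, by omega⟩ = false) := by
  have hp := uval_pos π le_rfl h
  rw [bval_zero, bval_eq π ε le_rfl h]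
  rcases hb : ε ⟨1-1, by omega⟩ <;> simp [hb] <;> omega

lemma not_desc_iff_asc {i : ℕ} (hi : i < n) :
    (¬ (bval π ε (i+1) < bval π ε i) ↔ bval π ε i < bval π ε (i+1)) := by
  rcases Nat.eq_zero_or_pos i with rfl | h1
  · rw [desc0_iff π ε (by omega), asc0_iff π ε (by omega)]
    rcases hb : ε ⟨0, by omega⟩ <;> simp
  · rw [desc_iff π ε h1 (by omega), asc_iff π ε h1 (by omega)]
    have hne := uval_ne π h1 (by omega) (by omega : 1 ≤ i+1) (by omega) (by omega)
    by_cases hc : uval π (i+1) < uval π i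
    · rw [if_pos hc, if_neg (by omega)]
      rcases hb : ε ⟨i-1, by omega⟩ <;> simp
    · rw [if_neg hc, if_pos (by omega)]
      rcases hb : ε ⟨i, by omega⟩ <;> simp

lemma card_odd_range (n : ℕ) : ((Finset.range n).filter (fun i => i % 2 = 1)).card = n / 2 := by
  induction n with
  | zero => simp
  | succ m ih =>
    rw [Finset.range_add_one, Finset.filter_insert]
    by_cases h : m % 2 = 1
    · rw [if_pos h, Finset.card_insert_of_notMem (by simp), ih]; omega
    · rw [if_neg h, ih]; omega

lemma card_even_range (n : ℕ) : ((Finset.range n).filter (fun i => i % 2 = 0)).card = n - n / 2 := by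
  induction n with
  | zero => simp
  | succ m ih =>
    rw [Finset.range_add_one, Finset.filter_insert]
    by_cases h : m % 2 = 0
    · rw [if_pos h, Finset.card_insert_of_notMem (by simp), ih]; omega
    · rw [if_neg h, ih]; omega

end Stmt17
namespace Stmt17

open Finset

lemma count_funs {α : Type*} [Fintype α] [DecidableEq α] (F C : Finset α)
    (hd : Disjoint F C) (v : α → Bool) (m : ℕ) :
    (Finset.univ.filter (fun ε : α → Bool =>
        (∀ k ∈ F, ε k = v k) ∧ (C.filter (fun k => ε k = v k)).card = m)).card
      = C.card.choose m * 2 ^ (Fintype.card α - F.card - C.card) := by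
  classical
  set D : Finset α := Finset.univ \ (F ∪ C) with hD
  have hcard : (C.powersetCard m ×ˢ D.powerset).card
      = C.card.choose m * 2 ^ (Fintype.card α - F.card - C.card) := by
    rw [Finset.card_product, Finset.card_powersetCard, Finset.card_powerset]
    congr 2
    rw [hD, Finset.card_sdiff_of_subset (Finset.subset_univ _), Finset.card_union_of_disjoint hd,
      Finset.card_univ]
    omega
  rw [← hcard]
  apply Finset.card_bij' (i := fun ε _ => (C.filter (fun k => ε k = v k),
      D.filter (fun k => ε k = true)))
    (j := fun p _ => fun k => if k ∈ F then v k else if k ∈ C then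
      (if k ∈ p.1 then v k else !(v k)) else decide (k ∈ p.2))
  · intro ε hε
    simp only [Finset.mem_filter, Finset.mem_univ, true_and] at hε
    simp only [Finset.mem_product, Finset.mem_powersetCard, Finset.mem_powerset]
    exact ⟨⟨Finset.filter_subset _ _, hε.2⟩, Finset.filter_subset _ _⟩
  · intro p hp
    simp only [Finset.mem_product, Finset.mem_powersetCard, Finset.mem_powerset] at hp
    simp only [Finset.mem_filter, Finset.mem_univ, true_and]
    constructor
    · intro k hk; rw [if_pos hk]
    · have : (C.filter (fun k => (if k ∈ F then v k else if k ∈ C then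
          (if k ∈ p.1 then v k else !(v k)) else decide (k ∈ p.2)) = v k)) = p.1 := by
        ext k
        simp only [Finset.mem_filter]
        constructor
        · rintro ⟨hkC, hk⟩
          rw [if_neg (fun hkF => Finset.disjoint_left.mp hd hkF hkC), if_pos hkC] at hk
          by_contra hk1
          rw [if_neg hk1] at hk
          simp at hk
        · intro hk1
          have hkC := hp.1.1 hk1
          refine ⟨hkC, ?_⟩
          rw [if_neg (fun hkF => Finset.disjoint_left.mp hd hkF hkC), if_pos hkC, if_pos hk1]
      rw [this]
      exact hp.1.2
  · intro ε hε
    simp only [Finset.mem_filter, Finset.mem_univ, true_and] at hε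
    funext k
    by_cases hkF : k ∈ F
    · rw [if_pos hkF, hε.1 k hkF]
    · rw [if_neg hkF]
      by_cases hkC : k ∈ C
      · rw [if_pos hkC]
        by_cases hk1 : k ∈ C.filter (fun k => ε k = v k)
        · rw [if_pos hk1]
          exact ((Finset.mem_filter.mp hk1).2).symm
        · rw [if_neg hk1]
          have : ¬ (ε k = v k) := fun h => hk1 (Finset.mem_filter.mpr ⟨hkC, h⟩)
          rcases Bool.eq_false_or_eq_true (ε k) with h | h <;>
            rcases Bool.eq_false_or_eq_true (v k) with h' | h' <;>
            simp [h, h'] at this ⊢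
      · rw [if_neg hkC]
        have hkD : k ∈ D := by
          rw [hD]; simp [hkF, hkC]
        simp only [Finset.mem_filter, hkD, true_and]
        rcases Bool.eq_false_or_eq_true (ε k) with h | h <;> simp [h]
  · intro p hp
    simp only [Finset.mem_product, Finset.mem_powersetCard, Finset.mem_powerset] at hp
    have e1 : (C.filter (fun k => (if k ∈ F then v k else if k ∈ C then
        (if k ∈ p.1 then v k else !(v k)) else decide (k ∈ p.2)) = v k)) = p.1 := by
      ext k
      simp only [Finset.mem_filter]
      constructor
      · rintro ⟨hkC, hk⟩
        rw [if_neg (fun hkF => Finset.disjoint_left.mp hd hkF hkC), if_pos hkC] at hk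
        by_contra hk1
        rw [if_neg hk1] at hk
        simp at hk
      · intro hk1
        have hkC := hp.1.1 hk1
        refine ⟨hkC, ?_⟩
        rw [if_neg (fun hkF => Finset.disjoint_left.mp hd hkF hkC), if_pos hkC, if_pos hk1]
    have e2 : (D.filter (fun k => (if k ∈ F then v k else if k ∈ C then
        (if k ∈ p.1 then v k else !(v k)) else decide (k ∈ p.2)) = true)) = p.2 := by
      ext k
      simp only [Finset.mem_filter]
      constructor
      · rintro ⟨hkD, hk⟩
        rw [hD] at hkD
        simp only [Finset.mem_sdiff, Finset.mem_union, Finset.mem_univ, true_and,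
          not_or] at hkD
        rw [if_neg hkD.1, if_neg hkD.2] at hk
        simpa using hk
      · intro hk2
        have hkD : k ∈ D := hp.2 hk2
        have hkD' := hkD
        rw [hD] at hkD'
        simp only [Finset.mem_sdiff, Finset.mem_union, Finset.mem_univ, true_and,
          not_or] at hkD'
        refine ⟨hkD, ?_⟩
        rw [if_neg hkD'.1, if_neg hkD'.2]
        simpa using hk2
    exact Prod.ext e1 e2

end Stmt17
namespace Stmt17

open Finset

variable {n : ℕ}

/-- positions (1-based, in [1,n]) whose sign is forced when there are no even descents -/
def Fpred (π : Equiv.Perm (Fin n)) (k : ℕ) : Prop :=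
  if k % 2 = 1 then uval π (k-1) < uval π k
  else 0 < uval π (k+1) ∧ uval π (k+1) < uval π k

/-- positions whose (free) sign controls the descent status of an adjacent odd edge -/
def Cpred (π : Equiv.Perm (Fin n)) (k : ℕ) : Prop :=
  if k % 2 = 1 then
    uval π (k+1) < uval π k ∧ uval π k < uval π (k-1) ∧ 0 < uval π (k+1)
  else uval π (k-1) < uval π k ∧ ¬(0 < uval π (k+1) ∧ uval π (k+1) < uval π k)

instance (π : Equiv.Perm (Fin n)) : DecidablePred (Fpred π) := fun k => by
  unfold Fpred; infer_instance

instance (π : Equiv.Perm (Fin n)) : DecidablePred (Cpred π) := fun k => by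
  unfold Cpred; infer_instance

/-- the forced sign (also: the sign giving a descent, for controlling positions) -/
def vB (k : ℕ) : Bool := decide (k % 2 = 0)

def FS (π : Equiv.Perm (Fin n)) : Finset (Fin n) :=
  Finset.univ.filter (fun k => Fpred π ((k : ℕ) + 1))

def CS (π : Equiv.Perm (Fin n)) : Finset (Fin n) :=
  Finset.univ.filter (fun k => Cpred π ((k : ℕ) + 1))

def PK (π : Equiv.Perm (Fin n)) : Finset ℕ :=
  (Finset.Ico 1 n).filter
    (fun i => uval π (i - 1) < uval π i ∧ uval π (i + 1) < uval π i)

lemma lpk_eq_card_PK (π : Equiv.Perm (Fin n)) : lpk π = (PK π).card := rfl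

lemma mem_FS {π : Equiv.Perm (Fin n)} {k : Fin n} : k ∈ FS π ↔ Fpred π ((k : ℕ) + 1) := by
  simp [FS]

lemma mem_CS {π : Equiv.Perm (Fin n)} {k : Fin n} : k ∈ CS π ↔ Cpred π ((k : ℕ) + 1) := by
  simp [CS]

lemma uval_pos_range (π : Equiv.Perm (Fin n)) {m : ℕ} (h : 0 < uval π m) :
    1 ≤ m ∧ m ≤ n := by
  by_contra hc
  rw [uval_zero π hc] at h
  omega

lemma forced_not_ctrl (π : Equiv.Perm (Fin n)) (k : ℕ) (hF : Fpred π k) (hC : Cpred π k) :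
    False := by
  unfold Fpred at hF
  unfold Cpred at hC
  by_cases h : k % 2 = 1 <;> simp only [h, if_true, if_false] at hF hC
  · omega
  · exact hC.2 hF

lemma disj_FS_CS (π : Equiv.Perm (Fin n)) : Disjoint (FS π) (CS π) := by
  rw [Finset.disjoint_left]
  intro k hk hk'
  exact forced_not_ctrl π _ (mem_FS.mp hk) (mem_CS.mp hk')

lemma peak_forced (π : Equiv.Perm (Fin n)) {i : ℕ} (h : i ∈ PK π) : Fpred π i := by
  simp only [PK, Finset.mem_filter, Finset.mem_Ico] at h
  obtain ⟨⟨h1, h2⟩, h3, h4⟩ := h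
  unfold Fpred
  by_cases hp : i % 2 = 1
  · rw [if_pos hp]; exact h3
  · rw [if_neg hp]
    exact ⟨uval_pos π (by omega) (by omega), h4⟩

variable (π : Equiv.Perm (Fin n)) (ε : Fin n → Bool)

lemma lemA : bdes0 π ε = 0 ↔ ∀ k ∈ FS π, ε k = vB ((k : ℕ) + 1) := by
  unfold bdes0
  rw [Finset.card_eq_zero, Finset.filter_eq_empty_iff]
  constructor
  · intro H k hk
    have hkn : (k : ℕ) < n := k.isLt
    have hF := mem_FS.mp hk
    unfold Fpred at hF
    by_cases hp : ((k : ℕ) + 1) % 2 = 1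
    · -- position p = k+1 odd, forced to false
      rw [if_pos hp] at hF
      have hvB : vB ((k : ℕ) + 1) = false := by
        unfold vB; simp; omega
      rw [hvB]
      rcases Nat.eq_zero_or_pos (k : ℕ) with h0 | h1
      · -- p = 1, edge 0
        have h0' : k = ⟨0, by omega⟩ := Fin.ext h0
        have hmem : (0 : ℕ) ∈ Finset.range n := Finset.mem_range.mpr (by omega)
        have hnd := not_and.mp (H hmem) rfl
        rw [not_desc_iff_asc π ε (by omega)] at hnd
        rw [asc0_iff π ε (by omega)] at hnd
        rw [h0']
        exact hnd
      · -- p ≥ 2 odd; even edge i = p - 1 = k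
        have hi : (k : ℕ) % 2 = 0 := by omega
        have hmem : (k : ℕ) ∈ Finset.range n := Finset.mem_range.mpr hkn
        have hnd := not_and.mp (H hmem) hi
        rw [not_desc_iff_asc π ε hkn] at hnd
        rw [asc_iff π ε h1 (by omega)] at hnd
        have harg : ((k : ℕ)) + 1 - 1 = (k : ℕ) := by omega
        rw [if_pos (by simpa [harg] using hF)] at hnd
        have : (⟨(k : ℕ), by omega⟩ : Fin n) = k := Fin.ext rfl
        rwa [this] at hnd
    · -- position p = k+1 even, forced to true
      rw [if_neg hp] at hF
      obtain ⟨hpos, hlt⟩ := hF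
      have hvB : vB ((k : ℕ) + 1) = true := by
        unfold vB; simp; omega
      rw [hvB]
      have hrange := uval_pos_range π hpos
      -- edge i = p = k+1, even since p even
      have hi : ((k : ℕ) + 1) % 2 = 0 := by omega
      have hmem : ((k : ℕ) + 1) ∈ Finset.range n := Finset.mem_range.mpr (by omega)
      have hnd := not_and.mp (H hmem) hi
      rw [not_desc_iff_asc π ε (by omega)] at hnd
      rw [asc_iff π ε (by omega) (by omega)] at hnd
      rw [if_neg (by omega)] at hnd
      have : (⟨(k : ℕ) + 1 - 1, by omega⟩ : Fin n) = k := Fin.ext (by simp)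
      rwa [this] at hnd
  · intro H i hi
    rw [Finset.mem_range] at hi
    rintro ⟨hpar, hdesc⟩
    rcases Nat.eq_zero_or_pos i with rfl | h1
    · -- edge 0
      rw [desc0_iff π ε (by omega)] at hdesc
      have h1F : (⟨0, by omega⟩ : Fin n) ∈ FS π := by
        rw [mem_FS]
        unfold Fpred
        simp only [Fin.val_mk]
        rw [if_pos (by norm_num)]
        rw [uval_zero π (by omega)]
        exact uval_pos π le_rfl (by omega)
      have := H _ h1F
      rw [hdesc] at this
      unfold vB at this
      simp at this
    · -- even edge i ≥ 2
      rw [desc_iff π ε h1 (by omega)] at hdesc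
      by_cases hc : uval π (i+1) < uval π i
      · rw [if_pos hc] at hdesc
        have hkF : (⟨i - 1, by omega⟩ : Fin n) ∈ FS π := by
          rw [mem_FS]
          unfold Fpred
          simp only [Fin.val_mk]
          have harg : i - 1 + 1 = i := by omega
          rw [harg, if_neg (by omega)]
          exact ⟨uval_pos π (by omega) (by omega), hc⟩
        have := H _ hkF
        rw [hdesc] at this
        unfold vB at this
        simp only [Fin.val_mk] at this
        have harg : i - 1 + 1 = i := by omega
        rw [harg] at this
        simp at this
        omega
      · rw [if_neg hc] at hdesc
        have hne := uval_ne π h1 (by omega) (by omega : 1 ≤ i+1) (by omega) (by omega)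
        have hlt : uval π i < uval π (i+1) := by omega
        have hkF : (⟨i, by omega⟩ : Fin n) ∈ FS π := by
          rw [mem_FS]
          unfold Fpred
          simp only [Fin.val_mk]
          rw [if_pos (by omega)]
          simpa using hlt
        have := H _ hkF
        rw [hdesc] at this
        unfold vB at this
        simp only [Fin.val_mk] at this
        simp at this
        omega

end Stmt17
namespace Stmt17

open Finset

variable {n : ℕ} (π : Equiv.Perm (Fin n)) (ε : Fin n → Bool)

lemma vB_odd {p : ℕ} (h : p % 2 = 1) : vB p = false := by unfold vB; simp; omega

lemma vB_even {p : ℕ} (h : p % 2 = 0) : vB p = true := by unfold vB; simp [h]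

lemma lemB (H : ∀ k ∈ FS π, ε k = vB ((k : ℕ) + 1)) :
    bdes1 π ε = lpk π + ((CS π).filter (fun k => ε k = vB ((k : ℕ) + 1))).card := by
  classical
  set CD := (CS π).filter (fun k => ε k = vB ((k : ℕ) + 1)) with hCD
  set T : Finset ℕ := PK π ∪ CD.image (fun k : Fin n => (k : ℕ) + 1) with hT
  have hCDsub : ∀ x ∈ CD.image (fun k : Fin n => (k : ℕ) + 1), Cpred π x := by
    intro x hx
    rw [Finset.mem_image] at hx
    obtain ⟨k, hk, rfl⟩ := hx
    exact mem_CS.mp (Finset.mem_filter.mp hk).1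
  have hdisj : Disjoint (PK π) (CD.image (fun k : Fin n => (k : ℕ) + 1)) := by
    rw [Finset.disjoint_left]
    intro x hx hx'
    exact forced_not_ctrl π x (peak_forced π hx) (hCDsub x hx')
  have hcardT : T.card = lpk π + CD.card := by
    rw [hT, Finset.card_union_of_disjoint hdisj, lpk_eq_card_PK,
      Finset.card_image_of_injective _ (fun k l h => Fin.ext (by omega))]
  rw [← hCD] at *
  rw [← hcardT]
  unfold bdes1
  apply Finset.card_bij (i := fun i _ => if uval π (i+1) < uval π i then i else i + 1)
  · -- maps to
    intro i hi
    rw [Finset.mem_filter, Finset.mem_range] at hi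
    obtain ⟨hin, hpar, hdesc⟩ := hi
    have h1 : 1 ≤ i := by omega
    have h2 : i + 1 ≤ n := by omega
    rw [desc_iff π ε h1 h2] at hdesc
    by_cases hc : uval π (i+1) < uval π i
    · rw [if_pos hc] at hdesc ⊢
      by_cases hc2 : uval π (i-1) < uval π i
      · exact Finset.mem_union_left _ (by
          simp only [PK, Finset.mem_filter, Finset.mem_Ico]
          exact ⟨⟨h1, hin⟩, hc2, hc⟩)
      · -- i ≥ 2 and a i < a (i-1); controlled, descent
        have hi2 : 2 ≤ i := by
          by_contra hlt
          have : i = 1 := by omega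
          subst this
          rw [uval_zero π (by omega)] at hc2
          exact hc2 (uval_pos π le_rfl (by omega))
        have hne := uval_ne π (by omega : 1 ≤ i - 1) (by omega) h1 (by omega)
          (by omega)
        apply Finset.mem_union_right
        rw [Finset.mem_image]
        refine ⟨⟨i - 1, by omega⟩, ?_, by simp; omega⟩
        rw [hCD, Finset.mem_filter, mem_CS]
        have hp : (i - 1 : ℕ) + 1 = i := by omega
        constructor
        · unfold Cpred
          simp only [Fin.val_mk, hp]
          rw [if_pos hpar]
          exact ⟨hc, by omega, uval_pos π (by omega) h2⟩
        · simp only [Fin.val_mk, hp]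
          rw [vB_odd hpar]
          exact hdesc
    · rw [if_neg hc] at hdesc ⊢
      have hne := uval_ne π h1 (by omega) (by omega : 1 ≤ i + 1) h2 (by omega)
      have hlt : uval π i < uval π (i+1) := by omega
      by_cases hc2 : 0 < uval π (i+2) ∧ uval π (i+2) < uval π (i+1)
      · apply Finset.mem_union_left
        simp only [PK, Finset.mem_filter, Finset.mem_Ico]
        have hi2 : i + 2 ≤ n := (uval_pos_range π hc2.1).2
        have hr : i + 1 - 1 = i := by omega
        refine ⟨⟨by omega, by omega⟩, ?_, ?_⟩
        · rw [hr]; exact hlt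
        · exact hc2.2
      · apply Finset.mem_union_right
        rw [Finset.mem_image]
        refine ⟨⟨i, by omega⟩, ?_, by simp⟩
        rw [hCD, Finset.mem_filter, mem_CS]
        constructor
        · unfold Cpred
          simp only [Fin.val_mk]
          rw [if_neg (by omega)]
          have hr : i + 1 - 1 = i := by omega
          rw [hr]
          exact ⟨hlt, by exact_mod_cast hc2⟩
        · simp only [Fin.val_mk]
          rw [vB_even (by omega)]
          exact hdesc
  · -- injective
    intro i1 hi1 i2 hi2 heq
    rw [Finset.mem_filter, Finset.mem_range] at hi1 hi2
    have p1 := hi1.2.1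
    have p2 := hi2.2.1
    by_cases hc1 : uval π (i1+1) < uval π i1 <;> by_cases hc2 : uval π (i2+1) < uval π i2
    · rw [if_pos hc1, if_pos hc2] at heq; omega
    · rw [if_pos hc1, if_neg hc2] at heq; omega
    · rw [if_neg hc1, if_pos hc2] at heq; omega
    · rw [if_neg hc1, if_neg hc2] at heq; omega
  · -- surjective
    intro x hx
    rw [hT, Finset.mem_union] at hx
    rcases hx with hx | hx
    · -- x is a peak
      simp only [PK, Finset.mem_filter, Finset.mem_Ico] at hx
      obtain ⟨⟨hx1, hx2⟩, hpl, hpr⟩ := hx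
      by_cases hpar : x % 2 = 1
      · refine ⟨x, ?_, ?_⟩
        · rw [Finset.mem_filter, Finset.mem_range]
          refine ⟨hx2, hpar, ?_⟩
          rw [desc_iff π ε hx1 (by omega), if_pos hpr]
          have hkF : (⟨x - 1, by omega⟩ : Fin n) ∈ FS π := by
            rw [mem_FS]
            unfold Fpred
            simp only [Fin.val_mk]
            have hr : x - 1 + 1 = x := by omega
            rw [hr, if_pos hpar]
            exact hpl
          have := H _ hkF
          simp only [Fin.val_mk] at this
          have hr : x - 1 + 1 = x := by omega
          rw [hr, vB_odd hpar] at this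
          exact this
        · rw [if_pos hpr]
      · -- even peak; edge x - 1
        have hx3 : 2 ≤ x := by omega
        refine ⟨x - 1, ?_, ?_⟩
        · rw [Finset.mem_filter, Finset.mem_range]
          have hr : x - 1 + 1 = x := by omega
          refine ⟨by omega, by omega, ?_⟩
          rw [desc_iff π ε (by omega) (by omega)]
          rw [if_neg (show ¬ uval π (x - 1 + 1) < uval π (x - 1) by
            simp only [hr]; omega)]
          have hkF : (⟨x - 1, by omega⟩ : Fin n) ∈ FS π := by
            rw [mem_FS]
            unfold Fpred
            simp only [Fin.val_mk]
            rw [hr, if_neg hpar]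
            exact ⟨uval_pos π (by omega) (by omega), hpr⟩
          have := H _ hkF
          simp only [Fin.val_mk] at this
          rw [vB_even (show (x - 1 + 1) % 2 = 0 by omega)] at this
          exact this
        · have hr : x - 1 + 1 = x := by omega
          rw [if_neg (show ¬ uval π (x - 1 + 1) < uval π (x - 1) by
            simp only [hr]; omega)]
          omega
    · -- x = k+1 for controlled k with matching sign
      rw [Finset.mem_image] at hx
      obtain ⟨k, hk, rfl⟩ := hx
      rw [hCD, Finset.mem_filter, mem_CS] at hk
      obtain ⟨hkC, hkε⟩ := hk
      set x := (k : ℕ) + 1 with hxdef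
      have hx1 : 1 ≤ x := by omega
      have hx2 : x ≤ n := by omega
      unfold Cpred at hkC
      by_cases hpar : x % 2 = 1
      · rw [if_pos hpar] at hkC
        obtain ⟨hc1, hc2, hc3⟩ := hkC
        have hxn : x < n := by
          have := (uval_pos_range π hc3).2
          omega
        refine ⟨x, ?_, by rw [if_pos hc1]⟩
        rw [Finset.mem_filter, Finset.mem_range]
        refine ⟨hxn, hpar, ?_⟩
        rw [desc_iff π ε hx1 (by omega), if_pos hc1]
        have he : (⟨x - 1, by omega⟩ : Fin n) = k :=
          Fin.ext (by simp only [Fin.val_mk]; omega)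
        rw [he, hkε, vB_odd hpar]
      · rw [if_neg hpar] at hkC
        obtain ⟨hc1, hc2⟩ := hkC
        have hx3 : 2 ≤ x := by omega
        have hr : x - 1 + 1 = x := by omega
        refine ⟨x - 1, ?_, ?_⟩
        · rw [Finset.mem_filter, Finset.mem_range]
          refine ⟨by omega, by omega, ?_⟩
          rw [desc_iff π ε (by omega) (by omega)]
          rw [if_neg (show ¬ uval π (x - 1 + 1) < uval π (x - 1) by
            simp only [hr]; omega)]
          have he : (⟨x - 1, by omega⟩ : Fin n) = k :=
            Fin.ext (by simp only [Fin.val_mk]; omega)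
          rw [he, hkε, vB_even (by omega)]
        · rw [if_neg (show ¬ uval π (x - 1 + 1) < uval π (x - 1) by
            simp only [hr]; omega)]
          omega

end Stmt17
namespace Stmt17

open Finset

variable {n : ℕ} (π : Equiv.Perm (Fin n))

lemma lemC : (CS π).card + lpk π = n / 2 := by
  classical
  set U : Finset ℕ := PK π ∪ (CS π).image (fun k : Fin n => (k : ℕ) + 1) with hU
  have hCsub : ∀ x ∈ (CS π).image (fun k : Fin n => (k : ℕ) + 1), Cpred π x ∧ 1 ≤ x ∧ x ≤ n := by
    intro x hx
    rw [Finset.mem_image] at hx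
    obtain ⟨k, hk, rfl⟩ := hx
    exact ⟨mem_CS.mp hk, by omega, by omega⟩
  have hdisj : Disjoint (PK π) ((CS π).image (fun k : Fin n => (k : ℕ) + 1)) := by
    rw [Finset.disjoint_left]
    intro x hx hx'
    exact forced_not_ctrl π x (peak_forced π hx) (hCsub x hx').1
  have hcardU : U.card = (CS π).card + lpk π := by
    rw [hU, Finset.card_union_of_disjoint hdisj, lpk_eq_card_PK,
      Finset.card_image_of_injective _ (fun k l h => Fin.ext (by omega)), Nat.add_comm]
  rw [← hcardU, ← card_odd_range n]
  -- facts about elements of U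
  have hodd : ∀ b ∈ U, b % 2 = 1 → uval π (b+1) < uval π b ∧ 1 ≤ b ∧ b < n := by
    intro b hb hpar
    rw [hU, Finset.mem_union] at hb
    rcases hb with hb | hb
    · simp only [PK, Finset.mem_filter, Finset.mem_Ico] at hb
      exact ⟨hb.2.2, hb.1.1, hb.1.2⟩
    · obtain ⟨hC, hb1, hb2⟩ := hCsub b hb
      unfold Cpred at hC
      rw [if_pos hpar] at hC
      exact ⟨hC.1, hb1, by
        have := (uval_pos_range π hC.2.2).2
        omega⟩
  have heven : ∀ b ∈ U, b % 2 = 0 → uval π (b-1) < uval π b ∧ 2 ≤ b ∧ b ≤ n := by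
    intro b hb hpar
    rw [hU, Finset.mem_union] at hb
    rcases hb with hb | hb
    · simp only [PK, Finset.mem_filter, Finset.mem_Ico] at hb
      exact ⟨hb.2.1, by omega, by omega⟩
    · obtain ⟨hC, hb1, hb2⟩ := hCsub b hb
      unfold Cpred at hC
      rw [if_neg (by omega)] at hC
      exact ⟨hC.1, by omega, hb2⟩
  apply Finset.card_bij (i := fun b _ => if b % 2 = 1 then b else b - 1)
  · intro b hb
    rw [Finset.mem_filter, Finset.mem_range]
    by_cases hpar : b % 2 = 1
    · rw [if_pos hpar]
      exact ⟨(hodd b hb hpar).2.2, hpar⟩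
    · rw [if_neg hpar]
      have := heven b hb (by omega)
      exact ⟨by omega, by omega⟩
  · intro b1 hb1 b2 hb2 heq
    by_cases hp1 : b1 % 2 = 1 <;> by_cases hp2 : b2 % 2 = 1
    · rw [if_pos hp1, if_pos hp2] at heq; exact heq
    · rw [if_pos hp1, if_neg hp2] at heq
      have h1 := hodd b1 hb1 hp1
      have h2 := heven b2 hb2 (by omega)
      have : b2 - 1 = b1 := heq.symm
      have hb : b2 = b1 + 1 := by omega
      subst hb
      have hr : b1 + 1 - 1 = b1 := by omega
      rw [hr] at h2
      omega
    · rw [if_neg hp1, if_pos hp2] at heq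
      have h1 := heven b1 hb1 (by omega)
      have h2 := hodd b2 hb2 hp2
      have hb : b1 = b2 + 1 := by omega
      subst hb
      have hr : b2 + 1 - 1 = b2 := by omega
      rw [hr] at h1
      omega
    · rw [if_neg hp1, if_neg hp2] at heq
      have h1 := heven b1 hb1 (by omega)
      have h2 := heven b2 hb2 (by omega)
      omega
  · intro i hi
    rw [Finset.mem_filter, Finset.mem_range] at hi
    obtain ⟨hin, hpar⟩ := hi
    have h1 : 1 ≤ i := by omega
    have h2 : i + 1 ≤ n := by omega
    by_cases hc : uval π (i+1) < uval π i
    · by_cases hc2 : uval π (i-1) < uval π i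
      · refine ⟨i, Finset.mem_union_left _ ?_, by rw [if_pos hpar]⟩
        simp only [PK, Finset.mem_filter, Finset.mem_Ico]
        exact ⟨⟨h1, hin⟩, hc2, hc⟩
      · have hi2 : 2 ≤ i := by
          by_contra hlt
          have : i = 1 := by omega
          subst this
          rw [uval_zero π (by omega)] at hc2
          exact hc2 (uval_pos π le_rfl (by omega))
        have hne := uval_ne π (by omega : 1 ≤ i - 1) (by omega) h1 (by omega) (by omega)
        refine ⟨i, Finset.mem_union_right _ ?_, by rw [if_pos hpar]⟩
        rw [Finset.mem_image]
        refine ⟨⟨i - 1, by omega⟩, ?_, by simp; omega⟩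
        rw [mem_CS]
        unfold Cpred
        simp only [Fin.val_mk]
        have hp : (i - 1 : ℕ) + 1 = i := by omega
        rw [hp, if_pos hpar]
        exact ⟨hc, by omega, uval_pos π (by omega) h2⟩
    · have hne := uval_ne π h1 (by omega) (by omega : 1 ≤ i + 1) h2 (by omega)
      have hlt : uval π i < uval π (i+1) := by omega
      by_cases hc2 : 0 < uval π (i+2) ∧ uval π (i+2) < uval π (i+1)
      · refine ⟨i + 1, Finset.mem_union_left _ ?_, by rw [if_neg (by omega)]; omega⟩
        simp only [PK, Finset.mem_filter, Finset.mem_Ico]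
        have hi2 : i + 2 ≤ n := (uval_pos_range π hc2.1).2
        have hr : i + 1 - 1 = i := by omega
        rw [hr]
        exact ⟨⟨by omega, by omega⟩, hlt, hc2.2⟩
      · refine ⟨i + 1, Finset.mem_union_right _ ?_, by rw [if_neg (by omega)]; omega⟩
        rw [Finset.mem_image]
        refine ⟨⟨i, by omega⟩, ?_, by simp⟩
        rw [mem_CS]
        unfold Cpred
        simp only [Fin.val_mk]
        rw [if_neg (by omega)]
        have hr : i + 1 - 1 = i := by omega
        rw [hr]
        exact ⟨hlt, by exact_mod_cast hc2⟩

lemma lemD : (FS π).card = n - n / 2 := by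
  classical
  rw [← card_even_range n]
  apply Finset.card_bij (i := fun k _ => if ((k : Fin n) : ℕ) % 2 = 0 then (k : ℕ) else (k : ℕ) + 1)
  · intro k hk
    have hF := mem_FS.mp hk
    unfold Fpred at hF
    rw [Finset.mem_filter, Finset.mem_range]
    by_cases hpar : ((k : ℕ)) % 2 = 0
    · rw [if_pos hpar]
      exact ⟨k.isLt, hpar⟩
    · rw [if_neg hpar]
      -- position k+1 even; forced gives 0 < a(k+2)
      rw [if_neg (by omega)] at hF
      have := (uval_pos_range π hF.1).2
      exact ⟨by omega, by omega⟩
  · intro k1 hk1 k2 hk2 heq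
    have hF1 := mem_FS.mp hk1
    have hF2 := mem_FS.mp hk2
    unfold Fpred at hF1 hF2
    by_cases hp1 : ((k1 : ℕ)) % 2 = 0 <;> by_cases hp2 : ((k2 : ℕ)) % 2 = 0
    · rw [if_pos hp1, if_pos hp2] at heq; exact Fin.ext heq
    · rw [if_pos hp1, if_neg hp2] at heq
      rw [if_pos (by omega)] at hF1
      rw [if_neg (by omega)] at hF2
      have he1 : (k1 : ℕ) + 1 - 1 = (k2 : ℕ) + 1 := by omega
      have he2 : (k2 : ℕ) + 1 + 1 = (k1 : ℕ) + 1 := by omega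
      rw [he1] at hF1
      rw [he2] at hF2
      omega
    · rw [if_neg hp1, if_pos hp2] at heq
      rw [if_neg (by omega)] at hF1
      rw [if_pos (by omega)] at hF2
      have he1 : (k2 : ℕ) + 1 - 1 = (k1 : ℕ) + 1 := by omega
      have he2 : (k1 : ℕ) + 1 + 1 = (k2 : ℕ) + 1 := by omega
      rw [he1] at hF2
      rw [he2] at hF1
      omega
    · rw [if_neg hp1, if_neg hp2] at heq
      exact Fin.ext (by omega)
  · intro i hi
    rw [Finset.mem_filter, Finset.mem_range] at hi
    obtain ⟨hin, hpar⟩ := hi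
    rcases Nat.eq_zero_or_pos i with rfl | h1
    · refine ⟨⟨0, by omega⟩, ?_, by simp⟩
      rw [mem_FS]
      unfold Fpred
      simp only [Fin.val_mk]
      rw [if_pos (by norm_num), uval_zero π (by omega)]
      exact uval_pos π le_rfl (by omega)
    · have h2 : 2 ≤ i := by omega
      by_cases hc : uval π (i+1) < uval π i
      · refine ⟨⟨i - 1, by omega⟩, ?_, ?_⟩
        · rw [mem_FS]
          unfold Fpred
          simp only [Fin.val_mk]
          have hp : (i - 1 : ℕ) + 1 = i := by omega
          rw [hp, if_neg (by omega)]
          exact ⟨uval_pos π (by omega) (by omega), hc⟩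
        · simp only [Fin.val_mk]
          rw [if_neg (by omega)]
          omega
      · have hne := uval_ne π (by omega : 1 ≤ i) (by omega) (by omega : 1 ≤ i + 1)
          (by omega) (by omega)
        have hlt : uval π i < uval π (i+1) := by omega
        refine ⟨⟨i, by omega⟩, ?_, ?_⟩
        · rw [mem_FS]
          unfold Fpred
          simp only [Fin.val_mk]
          rw [if_pos (by omega)]
          simpa using hlt
        · simp only [Fin.val_mk]
          rw [if_pos (by omega)]

end Stmt17
namespace Stmt17

open Finset

variable {n : ℕ}

lemma lpk_le (π : Equiv.Perm (Fin n)) : lpk π ≤ n / 2 := by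
  have := lemC π
  omega

lemma countN (π : Equiv.Perm (Fin n)) (j : ℕ) :
    (Finset.univ.filter (fun ε : Fin n → Bool =>
        bdes1 π ε = j ∧ bdes0 π ε = 0)).card
      = if lpk π ≤ j then (n / 2 - lpk π).choose (j - lpk π) * 2 ^ lpk π else 0 := by
  classical
  have key : ∀ ε : Fin n → Bool, (bdes1 π ε = j ∧ bdes0 π ε = 0) ↔
      ((∀ k ∈ FS π, ε k = vB ((k : ℕ) + 1)) ∧
        lpk π + ((CS π).filter (fun k => ε k = vB ((k : ℕ) + 1))).card = j) := by
    intro ε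
    constructor
    · rintro ⟨h1, h0⟩
      have H := (lemA π ε).mp h0
      exact ⟨H, by rw [← lemB π ε H]; exact h1⟩
    · rintro ⟨H, hc⟩
      exact ⟨by rw [lemB π ε H]; exact hc, (lemA π ε).mpr H⟩
  have hfilt : (Finset.univ.filter (fun ε : Fin n → Bool =>
      bdes1 π ε = j ∧ bdes0 π ε = 0))
      = (Finset.univ.filter (fun ε : Fin n → Bool =>
      (∀ k ∈ FS π, ε k = vB ((k : ℕ) + 1)) ∧
        lpk π + ((CS π).filter (fun k => ε k = vB ((k : ℕ) + 1))).card = j)) := by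
    apply Finset.filter_congr
    intro ε _
    exact_mod_cast (key ε)
  rw [hfilt]
  by_cases hj : lpk π ≤ j
  · rw [if_pos hj]
    have hfilt2 : (Finset.univ.filter (fun ε : Fin n → Bool =>
        (∀ k ∈ FS π, ε k = vB ((k : ℕ) + 1)) ∧
          lpk π + ((CS π).filter (fun k => ε k = vB ((k : ℕ) + 1))).card = j))
        = (Finset.univ.filter (fun ε : Fin n → Bool =>
        (∀ k ∈ FS π, ε k = vB ((k : ℕ) + 1)) ∧
          ((CS π).filter (fun k => ε k = vB ((k : ℕ) + 1))).card = j - lpk π)) := by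
      apply Finset.filter_congr
      intro ε _
      have : (lpk π + ((CS π).filter (fun k => ε k = vB ((k : ℕ) + 1))).card = j)
          ↔ (((CS π).filter (fun k => ε k = vB ((k : ℕ) + 1))).card = j - lpk π) := by
        omega
      exact_mod_cast and_congr_right (fun _ => this)
    rw [hfilt2]
    have h1 : (CS π).card = n / 2 - lpk π := by
      have := lemC π
      omega
    have h2 : Fintype.card (Fin n) - (FS π).card - (CS π).card = lpk π := by
      rw [Fintype.card_fin]
      have := lemC π
      have := lemD π
      have : n / 2 ≤ n := Nat.div_le_self n 2
      omega
    have hcf := count_funs (FS π) (CS π) (disj_FS_CS π)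
      (fun k => vB ((k : ℕ) + 1)) (j - lpk π)
    rw [h2, h1] at hcf
    convert hcf using 2
    first
      | exact Finset.filter_congr_decidable _ _ _
      | exact (Finset.filter_congr_decidable _ _ _).symm
      | congr!
  · rw [if_neg hj]
    rw [Finset.card_eq_zero, Finset.filter_eq_empty_iff]
    intro ε _
    rintro ⟨-, hc⟩
    omega

end Stmt17

theorem stmt17 (n j : ℕ) :
    b n j = ∑ i ∈ Finset.range (j + 1),
      Nat.choose (n / 2 - i) (j - i) * g n i * 2 ^ i := by
  classical
  have hb : b n j = (Finset.univ.filter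
      (fun p : Equiv.Perm (Fin n) × (Fin n → Bool) =>
        bdes1 p.1 p.2 = j ∧ bdes0 p.1 p.2 = 0)).card := by
    unfold b
    rw [Nat.card_eq_fintype_card, Fintype.card_subtype]
  have hg : ∀ i, g n i = (Finset.univ.filter
      (fun π : Equiv.Perm (Fin n) => lpk π = i)).card := by
    intro i
    unfold g
    rw [Nat.card_eq_fintype_card, Fintype.card_subtype]
  rw [hb]
  rw [Finset.card_filter]
  rw [← Finset.univ_product_univ, Finset.sum_product]
  have step1 : ∀ π : Equiv.Perm (Fin n),
      (∑ ε : Fin n → Bool, if bdes1 π ε = j ∧ bdes0 π ε = 0 then 1 else 0)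
        = if lpk π ≤ j then (n / 2 - lpk π).choose (j - lpk π) * 2 ^ lpk π else 0 := by
    intro π
    rw [← Finset.card_filter]
    exact Stmt17.countN π j
  calc (∑ π : Equiv.Perm (Fin n), ∑ ε : Fin n → Bool,
          if bdes1 π ε = j ∧ bdes0 π ε = 0 then 1 else 0)
      = ∑ π : Equiv.Perm (Fin n),
          (if lpk π ≤ j then (n / 2 - lpk π).choose (j - lpk π) * 2 ^ lpk π else 0) := by
        exact Finset.sum_congr rfl (fun π _ => step1 π)
    _ = ∑ π : Equiv.Perm (Fin n), ∑ i ∈ Finset.range (j + 1),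
          (if lpk π = i then (n / 2 - i).choose (j - i) * 2 ^ i else 0) := by
        apply Finset.sum_congr rfl
        intro π _
        by_cases hj : lpk π ≤ j
        · rw [if_pos hj, Finset.sum_ite_eq (Finset.range (j+1)) (lpk π)
            (fun i => (n / 2 - i).choose (j - i) * 2 ^ i),
            if_pos (Finset.mem_range.mpr (by omega))]
        · rw [if_neg hj]
          symm
          apply Finset.sum_eq_zero
          intro i hi
          rw [Finset.mem_range] at hi
          exact if_neg (by omega)
    _ = ∑ i ∈ Finset.range (j + 1), ∑ π : Equiv.Perm (Fin n),
          (if lpk π = i then (n / 2 - i).choose (j - i) * 2 ^ i else 0) :=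
        Finset.sum_comm
    _ = ∑ i ∈ Finset.range (j + 1),
          Nat.choose (n / 2 - i) (j - i) * g n i * 2 ^ i := by
        apply Finset.sum_congr rfl
        intro i _
        rw [← Finset.sum_filter, Finset.sum_const, smul_eq_mul, ← hg]
        ring
end
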